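/- For the harmonic oscillator bath with H_B = p²/(2m) + (mν²/2)q² and the Weyl–Moyal star product on ℝ², the KMS normalization factor is μ_KMS(1) = ∫ Exp(−βH_B) dq dp = 2πħ e^{−ħβν/2}/(1 − e^{−ħβν}) as a formal power series in ħ with nonzero constant term, and consequently the partition function Z = μ_KMS(1)/(2πħ) = e^{−ħβν/2}/(1 − e^{−ħβν}) is a formal Laurent series in ħ with a simple pole at ħ = 0. -/

import Mathlib

open MeasureTheory

noncomputable section

/-- Harmonic oscillator Hamiltonian `H_B = p²/(2m) + (mν²/2) q²`. -/
def Hosc (m ν q p : ℝ) : ℝ := p ^ 2 / (2 * m) + m * ν ^ 2 / 2 * q ^ 2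

/-- The star exponential `Exp(−βH_B)` of the harmonic oscillator for the
Weyl–Moyal star product, at `ħ = hbar`. -/
def starExp (m ν β hbar q p : ℝ) : ℝ :=
  (1 / Real.cosh (hbar * β * ν / 2)) *
    Real.exp (-(2 * Hosc m ν q p / (hbar * ν)) * Real.tanh (hbar * β * ν / 2))

open Real in
lemma kms_integral (m ν β hbar : ℝ) (hm : 0 < m) (hν : 0 < ν) (hβ : 0 < β)
    (hh : 0 < hbar) :
    ∫ x : ℝ × ℝ, starExp m ν β hbar x.1 x.2
      = Real.pi * hbar / Real.sinh (hbar * β * ν / 2) := by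
  set c := hbar * β * ν / 2 with hc
  have hcpos : 0 < c := by positivity
  set t := Real.tanh c with htdef
  have ht : 0 < t := by
    rw [htdef, Real.tanh_eq_sinh_div_cosh]
    exact div_pos (Real.sinh_pos_iff.2 hcpos) (Real.cosh_pos c)
  have hpt : ∀ q p : ℝ, starExp m ν β hbar q p
      = (1 / Real.cosh c) *
        (Real.exp (-(m * ν * t / hbar) * q ^ 2) * Real.exp (-(t / (m * hbar * ν)) * p ^ 2)) := by
    intro q p
    rw [starExp, ← Real.exp_add, Hosc]
    congr 2
    field_simp
    rw [htdef, hc]; ring_nf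
  simp only [hpt]
  rw [integral_const_mul, Measure.volume_eq_prod,
    integral_prod_mul (fun q => Real.exp (-(m * ν * t / hbar) * q ^ 2))
      (fun p => Real.exp (-(t / (m * hbar * ν)) * p ^ 2)),
    integral_gaussian, integral_gaussian]
  rw [← Real.sqrt_mul (by positivity)]
  rw [show π / (m * ν * t / hbar) * (π / (t / (m * hbar * ν))) = (π * hbar / t) ^ 2 by
    field_simp]
  rw [Real.sqrt_sq (by positivity)]
  rw [htdef, Real.tanh_eq_sinh_div_cosh]
  have h1 := (Real.cosh_pos c).ne'
  have h2 := (Real.sinh_pos_iff.2 hcpos).ne'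
  field_simp

open Real in
lemma sinh_formula (β ν hbar : ℝ) (hν : 0 < ν) (hβ : 0 < β) (hh : 0 < hbar) :
    Real.pi * hbar / Real.sinh (hbar * β * ν / 2)
      = 2 * Real.pi * hbar * Real.exp (-(hbar * β * ν / 2)) /
        (1 - Real.exp (-(hbar * β * ν))) := by
  set c := hbar * β * ν / 2 with hc
  have hcpos : 0 < c := by positivity
  have hs := (Real.sinh_pos_iff.2 hcpos).ne'
  have h1 : Real.exp c * Real.exp (-c) = 1 := by rw [← Real.exp_add]; simp
  have core : 2 * Real.sinh c * Real.exp (-c) = 1 - Real.exp (-(hbar * β * ν)) := by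
    rw [Real.sinh_eq, show -(hbar * β * ν) = (-c) + (-c) by rw [hc]; ring, Real.exp_add]
    linear_combination h1
  rw [← core]
  have he := (Real.exp_pos (-c)).ne'
  field_simp

open Real in
lemma sinh_slope_tendsto :
    Filter.Tendsto (fun x : ℝ => x / Real.sinh x) (nhdsWithin 0 (Set.Ioi 0)) (nhds 1) := by
  have h := (Real.hasDerivAt_sinh 0)
  rw [hasDerivAt_iff_tendsto_slope] at h
  have h2 : Filter.Tendsto (fun x : ℝ => Real.sinh x / x) (nhdsWithin 0 {(0:ℝ)}ᶜ) (nhds 1) := by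
    have : (fun x : ℝ => Real.sinh x / x) = slope Real.sinh 0 := by
      funext x; simp [slope_def_field]
    rw [this]
    simpa using h
  have h3 := (h2.inv₀ one_ne_zero).mono_left
    (nhdsWithin_mono 0 (fun x hx => ne_of_gt hx))
  simp only [inv_div, inv_one] at h3
  exact h3

/-- The KMS normalization factor of the harmonic oscillator bath
is `μ_KMS(1) = ∫ Exp(−βH_B) dq dp = 2πħ e^{−ħβν/2}/(1 − e^{−ħβν})`; it has
nonvanishing value `2π/(βν)` in the classical limit `ħ → 0⁺`, and consequently
the partition function `Z = μ_KMS(1)/(2πħ) = e^{−ħβν/2}/(1 − e^{−ħβν})`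
has a simple pole at `ħ = 0`: `ħ · Z → 1/(βν) ≠ 0` as `ħ → 0⁺`. -/
theorem kms_normalization_and_partition_function (m ν β : ℝ)
    (hm : 0 < m) (hν : 0 < ν) (hβ : 0 < β)
    (μKMS : ℝ → ℝ)
    (hμ : ∀ hbar : ℝ, μKMS hbar =
      ∫ x : ℝ × ℝ, starExp m ν β hbar x.1 x.2)
    (Z : ℝ → ℝ) (hZ : ∀ hbar : ℝ, Z hbar = μKMS hbar / (2 * Real.pi * hbar)) :
    (∀ hbar : ℝ, 0 < hbar →
      μKMS hbar = 2 * Real.pi * hbar * Real.exp (-(hbar * β * ν / 2)) /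
        (1 - Real.exp (-(hbar * β * ν)))) ∧
    Filter.Tendsto μKMS (nhdsWithin 0 (Set.Ioi 0))
      (nhds (2 * Real.pi / (β * ν))) ∧
    (∀ hbar : ℝ, 0 < hbar →
      Z hbar = Real.exp (-(hbar * β * ν / 2)) /
        (1 - Real.exp (-(hbar * β * ν)))) ∧
    Filter.Tendsto (fun hbar => hbar * Z hbar) (nhdsWithin 0 (Set.Ioi 0))
      (nhds (1 / (β * ν))) ∧
    (1 : ℝ) / (β * ν) ≠ 0 := by
  have hform : ∀ hbar : ℝ, 0 < hbar →
      μKMS hbar = Real.pi * hbar / Real.sinh (hbar * β * ν / 2) := by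
    intro h hh
    rw [hμ h, kms_integral m ν β h hm hν hβ hh]
  have hform2 : ∀ hbar : ℝ, 0 < hbar →
      μKMS hbar = 2 * Real.pi * hbar * Real.exp (-(hbar * β * ν / 2)) /
        (1 - Real.exp (-(hbar * β * ν))) := by
    intro h hh
    rw [hform h hh, sinh_formula β ν h hν hβ hh]
  -- the limit of μKMS
  have hg : Filter.Tendsto (fun h : ℝ => h * β * ν / 2) (nhdsWithin 0 (Set.Ioi 0))
      (nhdsWithin 0 (Set.Ioi 0)) := by
    rw [tendsto_nhdsWithin_iff]
    constructor
    · have : Filter.Tendsto (fun h : ℝ => h * β * ν / 2) (nhds 0) (nhds 0) := by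
        have hc : Continuous (fun h : ℝ => h * β * ν / 2) := by continuity
        simpa using hc.tendsto 0
      exact this.mono_left nhdsWithin_le_nhds
    · filter_upwards [self_mem_nhdsWithin] with h hh
      have : (0:ℝ) < h := hh
      exact Set.mem_Ioi.mpr (by positivity)
  have hmain : Filter.Tendsto μKMS (nhdsWithin 0 (Set.Ioi 0))
      (nhds (2 * Real.pi / (β * ν))) := by
    have heq : μKMS =ᶠ[nhdsWithin 0 (Set.Ioi 0)]
        fun h => (2 * Real.pi / (β * ν)) *
          ((h * β * ν / 2) / Real.sinh (h * β * ν / 2)) := by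
      filter_upwards [self_mem_nhdsWithin] with h hh
      have hh' : (0:ℝ) < h := hh
      rw [hform h hh']
      have hs := (Real.sinh_pos_iff.2 (show (0:ℝ) < h * β * ν / 2 by positivity)).ne'
      field_simp
    have ht := (sinh_slope_tendsto.comp hg).const_mul (2 * Real.pi / (β * ν))
    simp only [Function.comp] at ht
    refine Filter.Tendsto.congr' heq.symm ?_
    simpa using ht
  refine ⟨hform2, hmain, ?_, ?_, ?_⟩
  · intro h hh
    rw [hZ h, hform2 h hh]
    have h2π : (2 : ℝ) * Real.pi * h ≠ 0 := by positivity
    have hden : 1 - Real.exp (-(h * β * ν)) ≠ 0 := by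
      have : Real.exp (-(h * β * ν)) < 1 := Real.exp_lt_one_iff.mpr (by nlinarith [mul_pos (mul_pos hh hβ) hν])
      linarith
    field_simp
  · have heq : (fun hbar => hbar * Z hbar) =ᶠ[nhdsWithin 0 (Set.Ioi 0)]
        fun h => μKMS h / (2 * Real.pi) := by
      filter_upwards [self_mem_nhdsWithin] with h hh
      have hh' : (0:ℝ) < h := hh
      rw [hZ h]
      field_simp
    have ht := hmain.div_const (2 * Real.pi)
    refine Filter.Tendsto.congr' heq.symm ?_
    have : 2 * Real.pi / (β * ν) / (2 * Real.pi) = 1 / (β * ν) := by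
      have : Real.pi ≠ 0 := Real.pi_ne_zero
      field_simp
    rwa [this] at ht
  · positivity

end
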